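/- Fix C > 0, ε ≥ 0, J ≥ 1. For each t = 1, …, J let v_t : ℝ → ℝ^D be differentiable at θ₀, and let u* : ℝ → ℝ^D be differentiable at θ₀ and such that for every θ in a neighborhood of θ₀, u*(θ) is the global minimizer over u ∈ ℝ^D of f(θ, u) = ½‖u‖² + (C/2) · Σ_{t=1}^J (max{|t − ⟨u, v_t(θ)⟩| − ε, 0})². Assume the nondegeneracy condition |⟨u*(θ₀), v_t(θ₀)⟩ − t| ≠ ε for every t, and let A = {t : |⟨u*(θ₀), v_t(θ₀)⟩ − t| > ε} and e_t = e_ε(⟨u*(θ₀), v_t(θ₀)⟩ − t). Then the derivative w = (du*/dθ)(θ₀) satisfies the linear equation (I + C Σ_{t ∈ A} v_t(θ₀) v_t(θ₀)ᵀ) · w = − C · Σ_{t ∈ A} ( e_t · v_t'(θ₀) + ⟨u*(θ₀), v_t'(θ₀)⟩ · v_t(θ₀) ); since the matrix I + C Σ_{t ∈ A} v_t(θ₀) v_t(θ₀)ᵀ is invertible, this equation determines (du*/dθ)(θ₀) uniquely. -/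

import Mathlib

open scoped RealInnerProductSpace

/-!
Writing `e_ε` for the soft threshold, the squared `ε`-insensitive loss is
`(max (|x| - ε) 0)² = e_ε(x)²`, with derivative `2 e_ε(x)` off `|x| = ε`. So a minimizer `u` of the
SVR objective satisfies the first-order condition `u + C ∑ₜ e_ε(⟪u, vₜ⟫ - t) • vₜ = 0`.
Nondegeneracy at `θ₀` persists nearby, so this holds for `u = u*(θ)` for all `θ` near `θ₀`, and
differentiating it at `θ₀` gives the linear equation: `e_ε` has slope `1` on `A` and is locally
zero off `A`. Uniqueness holds because `⟪w, w + C ∑_A ⟪vₜ, w⟫ • vₜ⟫ ≥ ‖w‖²`.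
-/

noncomputable def softThreshold (ε x : ℝ) : ℝ :=
  if ε ≤ x then x - ε else if x ≤ -ε then x + ε else 0

lemma softThreshold_eq_zero {ε x : ℝ} (h : |x| ≤ ε) : softThreshold ε x = 0 := by
  rw [abs_le] at h
  unfold softThreshold
  split_ifs <;> linarith

lemma abs_softThreshold {ε : ℝ} (hε : 0 ≤ ε) (x : ℝ) :
    |softThreshold ε x| = max (|x| - ε) 0 := by
  unfold softThreshold
  split_ifs with h₁ h₂
  · rw [abs_of_nonneg (by linarith), abs_of_nonneg (by linarith), max_eq_left (by linarith)]
  · rw [abs_of_nonpos (by linarith), abs_of_nonpos (by linarith), max_eq_left (by linarith)]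
    ring
  · rw [abs_zero, max_eq_right (sub_nonpos.2 (abs_le.2 ⟨by linarith, by linarith⟩))]

lemma hasDerivAt_softThreshold {ε x : ℝ} (hε : 0 ≤ ε) (h : |x| ≠ ε) :
    HasDerivAt (softThreshold ε) (if ε < |x| then 1 else 0) x := by
  rcases h.lt_or_gt with hlt | hgt
  · rw [if_neg hlt.not_gt]
    obtain ⟨h₁, h₂⟩ := abs_lt.1 hlt
    refine (hasDerivAt_const x (0 : ℝ)).congr_of_eventuallyEq ?_
    filter_upwards [eventually_gt_nhds h₁, eventually_lt_nhds h₂] with y hy₁ hy₂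
    exact softThreshold_eq_zero (abs_le.2 ⟨hy₁.le, hy₂.le⟩)
  · rw [if_pos hgt]
    rcases lt_abs.1 hgt with hpos | hneg
    · refine ((hasDerivAt_id x).sub_const ε).congr_of_eventuallyEq ?_
      filter_upwards [eventually_gt_nhds hpos] with y hy
      simp [softThreshold, hy.le]
    · have hneg : x < -ε := by linarith
      refine ((hasDerivAt_id x).add_const ε).congr_of_eventuallyEq ?_
      filter_upwards [eventually_lt_nhds hneg] with y hy
      simp [softThreshold, hy.le, (show ¬ ε ≤ y by linarith)]

lemma hasDerivAt_softThreshold_sq {ε x : ℝ} (hε : 0 ≤ ε) (h : |x| ≠ ε) :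
    HasDerivAt (fun y => softThreshold ε y ^ 2) (2 * softThreshold ε x) x := by
  refine ((hasDerivAt_softThreshold hε h).pow 2).congr_deriv ?_
  split_ifs with hx
  · ring
  · simp [softThreshold_eq_zero (not_lt.1 hx)]

section

variable {ι E : Type*} [NormedAddCommGroup E] [InnerProductSpace ℝ E]

theorem add_smul_sum_inner_smul_injective {C : ℝ} (hC : 0 ≤ C) (s : Finset ι) (x : ι → E) :
    Function.Injective fun w : E => w + C • ∑ i ∈ s, ⟪x i, w⟫ • x i := by
  intro w₁ w₂ h
  set d := w₁ - w₂
  have hd : d + C • ∑ i ∈ s, ⟪x i, d⟫ • x i = 0 := by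
    rw [← sub_eq_zero.2 h]
    simp only [d, inner_sub_right, sub_smul, Finset.sum_sub_distrib, smul_sub]
    abel
  have hdd : ⟪d, d⟫ + C * ∑ i ∈ s, ⟪x i, d⟫ ^ 2 = 0 := by
    have := congrArg (⟪d, ·⟫) hd
    simpa [inner_add_right, inner_smul_right, inner_sum, real_inner_comm d, sq] using this
  have hsq : 0 ≤ C * ∑ i ∈ s, ⟪x i, d⟫ ^ 2 :=
    mul_nonneg hC (Finset.sum_nonneg fun i _ => sq_nonneg _)
  have hd0 : ⟪d, d⟫ = 0 := by linarith [real_inner_self_nonneg (x := d)]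
  exact sub_eq_zero.1 (inner_self_eq_zero.1 hd0)

variable [Fintype ι]

theorem IsLocalMin.add_smul_sum_smul_eq_zero {c : ℝ} {ψ : ι → ℝ → ℝ} {ψ' : ι → ℝ}
    {x : ι → E} {u₀ : E} (hψ : ∀ i, HasDerivAt (ψ i) (ψ' i) ⟪u₀, x i⟫)
    (hmin : IsLocalMin (fun u => 1 / 2 * ‖u‖ ^ 2 + c * ∑ i, ψ i ⟪u, x i⟫) u₀) :
    u₀ + c • ∑ i, ψ' i • x i = 0 := by
  set g := u₀ + c • ∑ i, ψ' i • x i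
  have hterm : ∀ i, HasFDerivAt (fun u => ψ i ⟪u, x i⟫) (ψ' i • innerSL ℝ (x i)) u₀ := by
    intro i
    have hinner : HasFDerivAt (fun u : E => ⟪u, x i⟫) (innerSL ℝ (x i)) u₀ :=
      (innerSL ℝ (x i)).hasFDerivAt.congr_of_eventuallyEq
        (.of_forall fun u => real_inner_comm (x i) u)
    exact (hψ i).comp_hasFDerivAt u₀ hinner
  have hf : HasFDerivAt (fun u => 1 / 2 * ‖u‖ ^ 2 + c * ∑ i, ψ i ⟪u, x i⟫) (innerSL ℝ g) u₀ := by
    refine (((hasFDerivAt_id u₀).norm_sq.const_mul (1 / 2)).add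
      ((HasFDerivAt.fun_sum fun i _ => hterm i).const_mul c)).congr_fderiv ?_
    ext y
    simp [g]
  have hg : ⟪g, g⟫ = 0 := by
    simpa using congrArg (fun L => L g) (hmin.hasFDerivAt_eq_zero hf)
  exact inner_self_eq_zero.1 hg

noncomputable def svrObjective (C ε : ℝ) (b : ι → ℝ) (x : ι → E) (u : E) : ℝ :=
  1 / 2 * ‖u‖ ^ 2 + C / 2 * ∑ i, (max (|b i - ⟪u, x i⟫| - ε) 0) ^ 2

theorem add_smul_sum_softThreshold_smul_eq_zero_of_forall_svrObjective_le {C ε : ℝ}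
    (hε : 0 ≤ ε) {b : ι → ℝ} {x : ι → E} {u₀ : E} (hnd : ∀ i, |⟪u₀, x i⟫ - b i| ≠ ε)
    (hmin : ∀ u, svrObjective C ε b x u₀ ≤ svrObjective C ε b x u) :
    u₀ + C • ∑ i, softThreshold ε (⟪u₀, x i⟫ - b i) • x i = 0 := by
  have hloss : ∀ i, HasDerivAt (fun y => (max (|b i - y| - ε) 0) ^ 2)
      (2 * softThreshold ε (⟪u₀, x i⟫ - b i)) ⟪u₀, x i⟫ := by
    intro i
    simp only [← abs_softThreshold hε, sq_abs, abs_sub_comm (b i)]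
    exact (hasDerivAt_softThreshold_sq hε (hnd i)).comp_sub_const _ _
  have := IsLocalMin.add_smul_sum_smul_eq_zero hloss (.of_forall hmin)
  simp_rw [mul_smul, ← Finset.smul_sum, smul_smul, div_mul_cancel₀ C two_ne_zero] at this
  exact this

theorem hasDerivAt_add_smul_sum_softThreshold_smul {C ε θ₀ : ℝ} (hε : 0 ≤ ε) {u : ℝ → E} {w : E}
    {x : ι → ℝ → E} {x' : ι → E} {b : ι → ℝ} (hu : HasDerivAt u w θ₀)
    (hx : ∀ i, HasDerivAt (x i) (x' i) θ₀) (hnd : ∀ i, |⟪u θ₀, x i θ₀⟫ - b i| ≠ ε) :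
    HasDerivAt (fun θ => u θ + C • ∑ i, softThreshold ε (⟪u θ, x i θ⟫ - b i) • x i θ)
      (w + C • ∑ i with ε < |⟪u θ₀, x i θ₀⟫ - b i|, ⟪x i θ₀, w⟫ • x i θ₀ +
        C • ∑ i with ε < |⟪u θ₀, x i θ₀⟫ - b i|,
          (softThreshold ε (⟪u θ₀, x i θ₀⟫ - b i) • x' i + ⟪u θ₀, x' i⟫ • x i θ₀)) θ₀ := by
  have hterm : ∀ i, HasDerivAt (fun θ => softThreshold ε (⟪u θ, x i θ⟫ - b i) • x i θ)
      (if ε < |⟪u θ₀, x i θ₀⟫ - b i| then ⟪x i θ₀, w⟫ • x i θ₀ +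
        (softThreshold ε (⟪u θ₀, x i θ₀⟫ - b i) • x' i + ⟪u θ₀, x' i⟫ • x i θ₀) else 0) θ₀ := by
    intro i
    have hs := (hu.inner ℝ (hx i)).sub_const (b i)
    refine (((hasDerivAt_softThreshold hε (hnd i)).comp θ₀ hs).smul (hx i)).congr_deriv ?_
    split_ifs with h
    · simp only [Function.comp_apply, one_mul, real_inner_comm w]
      module
    · simp [softThreshold_eq_zero (not_lt.1 h)]
  refine (hu.add ((HasDerivAt.fun_sum fun i _ => hterm i).const_smul C)).congr_deriv ?_
  rw [add_assoc, ← smul_add, ← Finset.sum_add_distrib, Finset.sum_filter]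

end

theorem rankPool_argmin_deriv_general
    (D J : ℕ) (C ε : ℝ) (hC : 0 < C) (hε : 0 ≤ ε)
    (v : Fin J → ℝ → EuclideanSpace ℝ (Fin D))
    (v' : Fin J → EuclideanSpace ℝ (Fin D))
    (θ₀ : ℝ)
    (hv : ∀ t : Fin J, HasDerivAt (v t) (v' t) θ₀)
    (ustar : ℝ → EuclideanSpace ℝ (Fin D))
    (hu : DifferentiableAt ℝ ustar θ₀)
    (hmin : ∀ᶠ θ in nhds θ₀, ∀ u : EuclideanSpace ℝ (Fin D),
      (1 / 2) * ‖ustar θ‖ ^ 2 +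
          (C / 2) * ∑ t : Fin J, (max (|(((t : ℕ) : ℝ) + 1) - ⟪ustar θ, v t θ⟫| - ε) 0) ^ 2 ≤
        (1 / 2) * ‖u‖ ^ 2 +
          (C / 2) * ∑ t : Fin J, (max (|(((t : ℕ) : ℝ) + 1) - ⟪u, v t θ⟫| - ε) 0) ^ 2)
    (hnd : ∀ t : Fin J, |⟪ustar θ₀, v t θ₀⟫ - (((t : ℕ) : ℝ) + 1)| ≠ ε)
    (eps : ℝ → ℝ)
    (heps : ∀ x : ℝ, eps x = if ε ≤ x then x - ε else if x ≤ -ε then x + ε else 0)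
    (e : Fin J → ℝ)
    (he : ∀ t, e t = eps (⟪ustar θ₀, v t θ₀⟫ - (((t : ℕ) : ℝ) + 1)))
    (A : Finset (Fin J))
    (hA : A = Finset.univ.filter
      (fun t : Fin J => ε < |⟪ustar θ₀, v t θ₀⟫ - (((t : ℕ) : ℝ) + 1)|)) :
    (deriv ustar θ₀ + C • ∑ t ∈ A, ⟪v t θ₀, deriv ustar θ₀⟫ • v t θ₀ =
        -(C • ∑ t ∈ A, (e t • v' t + ⟪ustar θ₀, v' t⟫ • v t θ₀))) ∧
    (∀ w : EuclideanSpace ℝ (Fin D),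
      w + C • ∑ t ∈ A, ⟪v t θ₀, w⟫ • v t θ₀ =
          -(C • ∑ t ∈ A, (e t • v' t + ⟪ustar θ₀, v' t⟫ • v t θ₀)) →
        w = deriv ustar θ₀) := by
  obtain rfl : e = fun t => softThreshold ε (⟪ustar θ₀, v t θ₀⟫ - (((t : ℕ) : ℝ) + 1)) :=
    funext fun t => (he t).trans (heps _)
  subst hA
  have hnd_near : ∀ᶠ θ in nhds θ₀, ∀ t, |⟪ustar θ, v t θ⟫ - (((t : ℕ) : ℝ) + 1)| ≠ ε :=
    Filter.eventually_all.2 fun t =>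
      (((hu.hasDerivAt.inner ℝ (hv t)).continuousAt.sub continuousAt_const).abs).eventually_ne
        (hnd t)
  have hstationary : ∀ᶠ θ in nhds θ₀, ustar θ + C • ∑ t, softThreshold ε
      (⟪ustar θ, v t θ⟫ - (((t : ℕ) : ℝ) + 1)) • v t θ = 0 := by
    filter_upwards [hmin, hnd_near] with θ hminθ hndθ
    exact add_smul_sum_softThreshold_smul_eq_zero_of_forall_svrObjective_le hε hndθ hminθ
  have hderiv := (hasDerivAt_add_smul_sum_softThreshold_smul hε hu.hasDerivAt hv hnd).unique
    ((hasDerivAt_const θ₀ 0).congr_of_eventuallyEq hstationary)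
  have hsolves := eq_neg_of_add_eq_zero_left hderiv
  exact ⟨hsolves, fun w hw => add_smul_sum_inner_smul_injective hC.le _ _ (hw.trans hsolves.symm)⟩

/-- **Differentiating the rank pooling operator through its argmin.**
Let `u* θ` be the global minimizer of the parametric SVR objective
`f(θ, u) = ½‖u‖² + (C/2) ∑ₜ (max (|t - ⟪u, v t θ⟫| - ε) 0)²` for `θ` near `θ₀`,
with `v t` and `u*` differentiable at `θ₀` and a nondegeneracy condition at `θ₀`.
Then `w = (du*/dθ)(θ₀)` satisfies
`(I + C ∑_{t∈A} v_t v_tᵀ) w = -C ∑_{t∈A} (e_t v_t' + ⟪u*, v_t'⟫ v_t)`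
and since the matrix on the left is invertible this determines `w` uniquely. -/
theorem rankPool_argmin_deriv
    (D J : ℕ) (hJ : 1 ≤ J) (C ε : ℝ) (hC : 0 < C) (hε : 0 ≤ ε)
    (v : Fin J → ℝ → EuclideanSpace ℝ (Fin D))
    (v' : Fin J → EuclideanSpace ℝ (Fin D))
    (θ₀ : ℝ)
    (hv : ∀ t : Fin J, HasDerivAt (v t) (v' t) θ₀)
    (ustar : ℝ → EuclideanSpace ℝ (Fin D))
    (hu : DifferentiableAt ℝ ustar θ₀)
    (hmin : ∀ᶠ θ in nhds θ₀, ∀ u : EuclideanSpace ℝ (Fin D),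
      (1 / 2) * ‖ustar θ‖ ^ 2 +
          (C / 2) * ∑ t : Fin J, (max (|(((t : ℕ) : ℝ) + 1) - ⟪ustar θ, v t θ⟫| - ε) 0) ^ 2 ≤
        (1 / 2) * ‖u‖ ^ 2 +
          (C / 2) * ∑ t : Fin J, (max (|(((t : ℕ) : ℝ) + 1) - ⟪u, v t θ⟫| - ε) 0) ^ 2)
    (hnd : ∀ t : Fin J, |⟪ustar θ₀, v t θ₀⟫ - (((t : ℕ) : ℝ) + 1)| ≠ ε)
    (eps : ℝ → ℝ)
    (heps : ∀ x : ℝ, eps x = if ε ≤ x then x - ε else if x ≤ -ε then x + ε else 0)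
    (e : Fin J → ℝ)
    (he : ∀ t, e t = eps (⟪ustar θ₀, v t θ₀⟫ - (((t : ℕ) : ℝ) + 1)))
    (A : Finset (Fin J))
    (hA : A = Finset.univ.filter
      (fun t : Fin J => ε < |⟪ustar θ₀, v t θ₀⟫ - (((t : ℕ) : ℝ) + 1)|)) :
    (deriv ustar θ₀ + C • ∑ t ∈ A, ⟪v t θ₀, deriv ustar θ₀⟫ • v t θ₀ =
        -(C • ∑ t ∈ A, (e t • v' t + ⟪ustar θ₀, v' t⟫ • v t θ₀))) ∧
    (∀ w : EuclideanSpace ℝ (Fin D),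
      w + C • ∑ t ∈ A, ⟪v t θ₀, w⟫ • v t θ₀ =
          -(C • ∑ t ∈ A, (e t • v' t + ⟪ustar θ₀, v' t⟫ • v t θ₀)) →
        w = deriv ustar θ₀) :=
  rankPool_argmin_deriv_general D J C ε hC hε v v' θ₀ hv ustar hu hmin hnd eps heps e he A hA
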